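/- arXiv:2201.01921 — 4 statements merged into one kernel-verified Lean document; each statement's English description precedes it below -/
import Mathlib

section
/- Let v_u be the 1-periodic solution of v_u'(t) + g(u, v_u(t)) = f(t), v_u(n) = v_u(n+1), where u is a fixed real parameter. Assume |∂g/∂u| ≤ L₃ and 0 < g_min ≤ ∂g/∂v ≤ L₄. Then the derivative p(t) = ∂v_u(t)/∂u satisfies |p(t)| ≤ L₃ e^{L₄}/(1 − e^{−g_min}) + L₃ e^{L₄} for all t. -/
/-!
Maximum principle. By periodicity a maximum of `p` on `[0, 1]` can be taken either in the interior
or at the right endpoint, and there `p' ≥ 0`; the equation then gives `∂g/∂v · p ≤ -∂g/∂u ≤ L₃`,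
hence `p ≤ L₃ / g_min`, and symmetrically at a minimum. The stated constant dominates `L₃ / g_min`
because `1 - e^{-g_min} ≤ g_min` and `e^{L₄} ≥ 1`.
-/

open Real Set Filter Topology

lemma IsMaxOn.hasDerivAt_nonneg_of_right_end {p : ℝ → ℝ} {a b d : ℝ}
    (hmax : IsMaxOn p (Icc a b) b) (hab : a < b) (hd : HasDerivAt p d b) : 0 ≤ d := by
  have hslope : Tendsto (slope p b) (𝓝[<] b) (𝓝 d) :=
    (hasDerivAt_iff_tendsto_slope_left_right.1 hd).1
  refine ge_of_tendsto hslope ?_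
  filter_upwards [Ioo_mem_nhdsLT hab] with t ht
  rw [slope_def_field]
  exact div_nonneg_of_nonpos (sub_nonpos.2 (hmax ⟨ht.1.le, ht.2.le⟩)) (sub_nonpos.2 ht.2.le)

lemma exists_isMaxOn_Icc_deriv_nonneg_of_eq {p p' : ℝ → ℝ} {a b : ℝ} (hab : a < b)
    (hp : ∀ t ∈ Icc a b, HasDerivAt p (p' t) t) (hper : p a = p b) :
    ∃ t ∈ Icc a b, IsMaxOn p (Icc a b) t ∧ 0 ≤ p' t := by
  have hcont : ContinuousOn p (Icc a b) := fun t ht => (hp t ht).continuousAt.continuousWithinAt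
  obtain ⟨t₀, ht₀, hmax⟩ := isCompact_Icc.exists_isMaxOn (nonempty_Icc.2 hab.le) hcont
  by_cases hint : t₀ ∈ Ioo a b
  · have hloc : IsLocalMax p t₀ := hmax.isLocalMax (Icc_mem_nhds hint.1 hint.2)
    exact ⟨t₀, ht₀, hmax, (hloc.hasDerivAt_eq_zero (hp t₀ ht₀)).ge⟩
  · have hend : p t₀ = p b := by
      rcases eq_endpoints_or_mem_Ioo_of_mem_Icc ht₀ with rfl | rfl | h
      exacts [hper, rfl, absurd h hint]
    have hbmax : IsMaxOn p (Icc a b) b := fun t ht => hend ▸ hmax ht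
    have hb : b ∈ Icc a b := right_mem_Icc.2 hab.le
    exact ⟨b, hb, hbmax, hbmax.hasDerivAt_nonneg_of_right_end hab (hp b hb)⟩

section LinearODE

variable {p α β : ℝ → ℝ} {a b m L : ℝ}

lemma le_div_of_linear_ode_of_eq (hab : a < b) (hm : 0 < m) (hL : 0 ≤ L)
    (hα : ∀ t ∈ Icc a b, m ≤ α t) (hβ : ∀ t ∈ Icc a b, -β t ≤ L)
    (hp : ∀ t ∈ Icc a b, HasDerivAt p (-(β t + α t * p t)) t) (hper : p a = p b) :
    ∀ t ∈ Icc a b, p t ≤ L / m := by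
  obtain ⟨t₀, ht₀, hmax, hderiv⟩ := exists_isMaxOn_Icc_deriv_nonneg_of_eq hab hp hper
  have hrel : α t₀ * p t₀ ≤ L := by linarith [hβ t₀ ht₀]
  have hmaxval : p t₀ ≤ L / m := by
    rw [le_div_iff₀ hm]
    rcases le_or_gt (p t₀) 0 with hneg | hpos
    · nlinarith
    · nlinarith [hα t₀ ht₀]
  exact fun t ht => (hmax ht).trans hmaxval

lemma abs_le_div_of_linear_ode_of_eq (hab : a < b) (hm : 0 < m)
    (hα : ∀ t ∈ Icc a b, m ≤ α t) (hβ : ∀ t ∈ Icc a b, |β t| ≤ L)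
    (hp : ∀ t ∈ Icc a b, HasDerivAt p (-(β t + α t * p t)) t) (hper : p a = p b) :
    ∀ t ∈ Icc a b, |p t| ≤ L / m := by
  have hL : 0 ≤ L := (abs_nonneg _).trans (hβ a (left_mem_Icc.2 hab.le))
  have hupper := le_div_of_linear_ode_of_eq hab hm hL hα
    (fun t ht => (neg_le_abs _).trans (hβ t ht)) hp hper
  have hneg : ∀ t ∈ Icc a b, HasDerivAt (-p) (-(-β t + α t * (-p) t)) t := fun t ht =>
    (hp t ht).neg.congr_deriv (by simp only [Pi.neg_apply]; ring)
  have hlower := le_div_of_linear_ode_of_eq (p := -p) hab hm hL hα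
    (fun t ht => by simpa using (le_abs_self _).trans (hβ t ht)) hneg (by simp [hper])
  intro t ht
  have := hlower t ht
  rw [Pi.neg_apply] at this
  exact abs_le.2 ⟨by linarith, hupper t ht⟩

end LinearODE

lemma div_le_mul_exp_div_one_sub_exp_neg_add {L m K : ℝ} (hL : 0 ≤ L) (hm : 0 < m)
    (hK : 0 ≤ K) : L / m ≤ L * exp K / (1 - exp (-m)) + L * exp K := by
  have hden : 0 < 1 - exp (-m) := sub_pos.2 (exp_lt_one_iff.2 (neg_lt_zero.2 hm))
  have hden_le : 1 - exp (-m) ≤ m := by linarith [add_one_le_exp (-m)]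
  have hLexp : L ≤ L * exp K := le_mul_of_one_le_right hL (one_le_exp hK)
  calc L / m ≤ L / (1 - exp (-m)) := div_le_div_of_nonneg_left hL hden hden_le
    _ ≤ L * exp K / (1 - exp (-m)) := div_le_div_of_nonneg_right hLexp hden.le
    _ ≤ L * exp K / (1 - exp (-m)) + L * exp K := le_add_of_nonneg_right (by positivity)

theorem stmt5_general
    (gmin L₃ L₄ u : ℝ) (hgmin : 0 < gmin)
    (gu gv : ℝ → ℝ → ℝ)
    (hgubd : ∀ a b, |gu a b| ≤ L₃)
    (hgvbd : ∀ a b, gmin ≤ gv a b ∧ gv a b ≤ L₄)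
    (vu p : ℝ → ℝ)
    (hp : ∀ t ∈ Set.Icc (0:ℝ) 1,
      HasDerivAt p (-(gu u (vu t) + gv u (vu t) * p t)) t)
    (hpper : p 0 = p 1) :
    ∀ t ∈ Set.Icc (0:ℝ) 1,
      |p t| ≤ L₃ * Real.exp L₄ / (1 - Real.exp (-gmin)) + L₃ * Real.exp L₄ := by
  have hL₃ : 0 ≤ L₃ := (abs_nonneg _).trans (hgubd 0 0)
  have hL₄ : 0 ≤ L₄ := hgmin.le.trans ((hgvbd 0 0).1.trans (hgvbd 0 0).2)
  intro t ht
  calc |p t| ≤ L₃ / gmin :=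
        abs_le_div_of_linear_ode_of_eq zero_lt_one hgmin (fun s _ => (hgvbd u (vu s)).1)
          (fun s _ => hgubd u (vu s)) hp hpper t ht
    _ ≤ _ := div_le_mul_exp_div_one_sub_exp_neg_add hL₃ hgmin hL₄

/-- Lemma 8: the derivative of the periodic solution with respect to the
parameter is uniformly bounded. -/
theorem stmt5
    (gmin L₃ L₄ u : ℝ) (hgmin : 0 < gmin)
    (g : ℝ → ℝ → ℝ) (gu gv : ℝ → ℝ → ℝ) (f : ℝ → ℝ)
    (hgu : ∀ a b, HasDerivAt (fun x => g x b) (gu a b) a)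
    (hgubd : ∀ a b, |gu a b| ≤ L₃)
    (hgv : ∀ a b, HasDerivAt (fun y => g a y) (gv a b) b)
    (hgvbd : ∀ a b, gmin ≤ gv a b ∧ gv a b ≤ L₄)
    (vu p : ℝ → ℝ)
    (hvu : ∀ t ∈ Set.Icc (0:ℝ) 1, HasDerivAt vu (f t - g u (vu t)) t)
    (hvuper : vu 0 = vu 1)
    (hp : ∀ t ∈ Set.Icc (0:ℝ) 1,
      HasDerivAt p (-(gu u (vu t) + gv u (vu t) * p t)) t)
    (hpper : p 0 = p 1) :
    ∀ t ∈ Set.Icc (0:ℝ) 1,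
      |p t| ≤ L₃ * Real.exp L₄ / (1 - Real.exp (-gmin)) + L₃ * Real.exp L₄ :=
  stmt5_general gmin L₃ L₄ u hgmin gu gv hgubd hgvbd vu p hp hpper
end

section
/- Consider the linear periodic boundary value problem p'(t) + a(t) p(t) = −b(t) on [0,1] with p(0) = p(1), where 0 < g_min ≤ a(t) ≤ L₄ and |b(t)| ≤ L₃. Then the unique periodic solution satisfies |p(0)| ≤ L₃ e^{L₄}/(1 − e^{−g_min}) and |p(t)| ≤ L₃ e^{L₄}/(1 − e^{−g_min}) + L₃ e^{L₄} for all t ∈ [0,1]. -/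
/-!
Multiplying by the integrating factor `exp (∫₀ᵗ a)` turns the equation into
`(p · exp (∫₀ᵗ a))' = -b · exp (∫₀ᵗ a)`, so `p t · exp (∫₀ᵗ a) = p 0 - I t` with
`I t = ∫₀ᵗ b · exp (∫₀ˢ a)`, and `|I t| ≤ L₃ e^{L₄}` because `0 ≤ ∫₀ˢ a ≤ L₄`.
Periodicity gives `p 0 · (exp (∫₀¹ a) - 1) = -I 1`, and
`exp (∫₀¹ a) - 1 ≥ e^{gmin} - 1 ≥ 1 - e^{-gmin}` bounds `p 0`.
Finally `|p t| ≤ |p t| · exp (∫₀ᵗ a) = |p 0 - I t|` bounds every `p t`.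
-/

open Real Set MeasureTheory intervalIntegral

lemma one_sub_exp_neg_le_exp_sub_one (x : ℝ) : 1 - exp (-x) ≤ exp x - 1 := by
  linarith [add_one_le_exp x, add_one_le_exp (-x)]

lemma abs_le_div_one_sub_exp_neg_of_mul_exp_sub_one_eq {q r A g C : ℝ} (hg : 0 < g)
    (hgA : g ≤ A) (hq : q * (exp A - 1) = r) (hr : |r| ≤ C) :
    |q| ≤ C / (1 - exp (-g)) := by
  have hdenom : 1 - exp (-g) ≤ exp A - 1 := (one_sub_exp_neg_le_exp_sub_one g).trans (by gcongr)
  have hdenom_pos : 0 < 1 - exp (-g) := by linarith [exp_lt_one_iff.2 (neg_neg_of_pos hg)]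
  rw [le_div_iff₀ hdenom_pos]
  calc |q| * (1 - exp (-g)) ≤ |q| * (exp A - 1) := by gcongr
    _ = |r| := by rw [← hq, abs_mul, abs_of_nonneg (hdenom_pos.le.trans hdenom)]
    _ ≤ C := hr

section IntegratingFactor

variable {a b p : ℝ → ℝ} {x y : ℝ}

lemma hasDerivAt_integral_of_mem_Ioo (ha : ContinuousOn a (Icc x y)) {t : ℝ}
    (ht : t ∈ Ioo x y) : HasDerivAt (fun u => ∫ s in x..u, a s) (a t) t :=
  integral_hasDerivAt_right
    ((ha.mono (Icc_subset_Icc_right ht.2.le)).intervalIntegrable_of_Icc ht.1.le)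
    ((ha.mono Ioo_subset_Icc_self).stronglyMeasurableAtFilter isOpen_Ioo t ht)
    (ha.continuousAt (Icc_mem_nhds ht.1 ht.2))

lemma continuousOn_integral_Icc (hxy : x ≤ y) (ha : ContinuousOn a (Icc x y)) :
    ContinuousOn (fun u => ∫ s in x..u, a s) (Icc x y) := by
  rw [← uIcc_of_le hxy] at ha ⊢
  exact continuousOn_primitive_interval (ha.integrableOn_compact isCompact_uIcc)

lemma mul_exp_integral_eq_sub_integral (hxy : x ≤ y) (ha : ContinuousOn a (Icc x y))
    (hb : ContinuousOn b (Icc x y))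
    (hode : ∀ t ∈ Icc x y, HasDerivAt p (-(b t) - a t * p t) t) :
    p y * exp (∫ s in x..y, a s) = p x - ∫ t in x..y, b t * exp (∫ s in x..t, a s) := by
  have hA := continuousOn_integral_Icc hxy ha
  have hp : ContinuousOn p (Icc x y) := fun t ht => (hode t ht).continuousAt.continuousWithinAt
  have hderiv : ∀ t ∈ Ioo x y, HasDerivAt (fun u => p u * exp (∫ s in x..u, a s))
      (-(b t * exp (∫ s in x..t, a s))) t := by
    intro t ht
    exact ((hode t (Ioo_subset_Icc_self ht)).mul
      (hasDerivAt_integral_of_mem_Ioo ha ht).exp).congr_deriv (by ring)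
  have hint : IntervalIntegrable (fun t => -(b t * exp (∫ s in x..t, a s))) volume x y :=
    ((hb.mul (continuous_exp.comp_continuousOn hA)).neg).intervalIntegrable_of_Icc hxy
  have hftc := integral_eq_sub_of_hasDerivAt_of_le hxy
    (hp.mul (continuous_exp.comp_continuousOn hA)) hderiv hint
  simp only [intervalIntegral.integral_neg, Pi.mul_apply, Function.comp_apply, integral_same,
    exp_zero, mul_one] at hftc
  linarith

lemma integral_le_mul_of_nonneg_of_le {L t : ℝ} (ha : ContinuousOn a (Icc x y))
    (ha_nonneg : ∀ s ∈ Icc x y, 0 ≤ a s) (ha_le : ∀ s ∈ Icc x y, a s ≤ L) (ht : t ∈ Icc x y) :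
    ∫ s in x..t, a s ≤ L * (y - x) := by
  have hxy : x ≤ y := ht.1.trans ht.2
  have hint := ha.intervalIntegrable_of_Icc (μ := volume) hxy
  calc ∫ s in x..t, a s ≤ ∫ s in x..y, a s :=
        integral_mono_interval le_rfl ht.1 ht.2
          ((ae_restrict_iff' measurableSet_Ioc).2 (ae_of_all _ fun s hs =>
            ha_nonneg s (Ioc_subset_Icc_self hs))) hint
    _ ≤ ∫ _ in x..y, L := integral_mono_on hxy hint intervalIntegrable_const ha_le
    _ = L * (y - x) := by rw [intervalIntegral.integral_const, smul_eq_mul, mul_comm]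

lemma abs_integral_mul_exp_le {A : ℝ → ℝ} {K M t : ℝ} (hb : ∀ s ∈ Icc x y, |b s| ≤ K)
    (hA : ∀ s ∈ Icc x y, A s ≤ M) (ht : t ∈ Icc x y) :
    |∫ s in x..t, b s * exp (A s)| ≤ K * exp M * (y - x) := by
  have hK : 0 ≤ K := (abs_nonneg _).trans (hb x ⟨le_rfl, ht.1.trans ht.2⟩)
  have hbound : ∀ s ∈ uIoc x t, ‖b s * exp (A s)‖ ≤ K * exp M := by
    intro s hs
    rw [uIoc_of_le ht.1] at hs
    have hs' : s ∈ Icc x y := ⟨hs.1.le, hs.2.trans ht.2⟩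
    rw [norm_mul, norm_of_nonneg (exp_pos _).le]
    exact mul_le_mul (hb s hs') (exp_le_exp.2 (hA s hs')) (exp_pos _).le hK
  calc |∫ s in x..t, b s * exp (A s)| ≤ K * exp M * |t - x| :=
        norm_integral_le_of_norm_le_const hbound
    _ ≤ K * exp M * (y - x) := by
      rw [abs_of_nonneg (sub_nonneg.2 ht.1)]
      gcongr
      exact ht.2

end IntegratingFactor

theorem stmt6_general
    (gmin L₃ L₄ : ℝ) (hgmin : 0 < gmin)
    (a b p : ℝ → ℝ)
    (ha : ContinuousOn a (Set.Icc (0:ℝ) 1))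
    (hb : ContinuousOn b (Set.Icc (0:ℝ) 1))
    (habd : ∀ t ∈ Set.Icc (0:ℝ) 1, gmin ≤ a t ∧ a t ≤ L₄)
    (hbbd : ∀ t ∈ Set.Icc (0:ℝ) 1, |b t| ≤ L₃)
    (hode : ∀ t ∈ Set.Icc (0:ℝ) 1, HasDerivAt p (-(b t) - a t * p t) t)
    (hper : p 0 = p 1) :
    |p 0| ≤ L₃ * Real.exp L₄ / (1 - Real.exp (-gmin)) ∧
      ∀ t ∈ Set.Icc (0:ℝ) 1,
        |p t| ≤ L₃ * Real.exp L₄ / (1 - Real.exp (-gmin)) + L₃ * Real.exp L₄ := by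
  set A : ℝ → ℝ := fun t => ∫ s in (0:ℝ)..t, a s
  set I : ℝ → ℝ := fun t => ∫ s in (0:ℝ)..t, b s * exp (A s)
  have ha_nonneg : ∀ t ∈ Icc (0:ℝ) 1, 0 ≤ a t := fun t ht => hgmin.le.trans (habd t ht).1
  have hA_le : ∀ t ∈ Icc (0:ℝ) 1, A t ≤ L₄ := fun t ht => by
    simpa using integral_le_mul_of_nonneg_of_le ha ha_nonneg (fun s hs => (habd s hs).2) ht
  have hI : ∀ t ∈ Icc (0:ℝ) 1, |I t| ≤ L₃ * exp L₄ := fun t ht => by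
    simpa using abs_integral_mul_exp_le hbbd hA_le ht
  have hsol : ∀ t ∈ Icc (0:ℝ) 1, p t * exp (A t) = p 0 - I t := fun t ht =>
    mul_exp_integral_eq_sub_integral ht.1 (ha.mono (Icc_subset_Icc_right ht.2))
      (hb.mono (Icc_subset_Icc_right ht.2)) fun s hs => hode s ⟨hs.1, hs.2.trans ht.2⟩
  have hA_one : gmin ≤ A 1 := by
    simpa using integral_mono_on zero_le_one intervalIntegrable_const
      (ha.intervalIntegrable_of_Icc (μ := volume) zero_le_one) fun t ht => (habd t ht).1
  have hperiodic : p 0 * (exp (A 1) - 1) = -I 1 := by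
    have h := hsol 1 (right_mem_Icc.2 zero_le_one)
    rw [← hper] at h
    linarith
  have hp0 : |p 0| ≤ L₃ * exp L₄ / (1 - exp (-gmin)) :=
    abs_le_div_one_sub_exp_neg_of_mul_exp_sub_one_eq hgmin hA_one hperiodic
      ((abs_neg _).trans_le (hI 1 (right_mem_Icc.2 zero_le_one)))
  refine ⟨hp0, fun t ht => ?_⟩
  calc |p t| ≤ |p t| * exp (A t) :=
        le_mul_of_one_le_right (abs_nonneg _) (one_le_exp
          (intervalIntegral.integral_nonneg ht.1 fun s hs => ha_nonneg s ⟨hs.1, hs.2.trans ht.2⟩))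
    _ = |p 0 - I t| := by rw [← hsol t ht, abs_mul, abs_of_pos (exp_pos _)]
    _ ≤ |p 0| + |I t| := abs_sub _ _
    _ ≤ _ := add_le_add hp0 (hI t ht)

/-- explicit bound for the linear periodic boundary value problem
p' + a p = -b, p(0) = p(1). -/
theorem stmt6
    (gmin L₃ L₄ : ℝ) (hgmin : 0 < gmin) (hL₃ : 0 < L₃) (hL₄ : 0 < L₄)
    (a b p : ℝ → ℝ)
    (ha : ContinuousOn a (Set.Icc (0:ℝ) 1))
    (hb : ContinuousOn b (Set.Icc (0:ℝ) 1))
    (habd : ∀ t ∈ Set.Icc (0:ℝ) 1, gmin ≤ a t ∧ a t ≤ L₄)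
    (hbbd : ∀ t ∈ Set.Icc (0:ℝ) 1, |b t| ≤ L₃)
    (hode : ∀ t ∈ Set.Icc (0:ℝ) 1, HasDerivAt p (-(b t) - a t * p t) t)
    (hper : p 0 = p 1) :
    |p 0| ≤ L₃ * Real.exp L₄ / (1 - Real.exp (-gmin)) ∧
      ∀ t ∈ Set.Icc (0:ℝ) 1,
        |p t| ≤ L₃ * Real.exp L₄ / (1 - Real.exp (-gmin)) + L₃ * Real.exp L₄ :=
  stmt6_general gmin L₃ L₄ hgmin a b p ha hb habd hbbd hode hper
end

section
/- Let Φ_U : ℝ → ℝ be the time-1 solution map of v' + g(U, v) = f(t) on [0,1] (sending an initial value v(0) to v(1)), where ∂g/∂v ≥ g_min > 0. Then Φ_U is a contraction with Lipschitz constant e^{−g_min} < 1, and hence has a unique fixed point v* (the periodic initial value); moreover the shooting iterates v_{k+1} = Φ_U(v_k) satisfy |v_k − v*| ≤ e^{−k g_min}|v_0 − v*|. -/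
/-!
If `G' ≥ m`, then `(G a - G b) (a - b) ≥ m (a - b)²`. The difference `D = x - y` of two solutions
of `v' = f t - G v` satisfies `D' = -(G x - G y)`, so the energy `e^{2mt} D²` is non-increasing
and the time-`T` map contracts by `e^{-mT}`. For `m > 0` and `T = 1` the Banach fixed point
theorem gives the periodic initial value, and iterating the Lipschitz bound gives the geometric
convergence of the shooting iterates.
-/

open Real Set Function

theorem mul_sq_sub_le_mul_sub_of_le_deriv {G G' : ℝ → ℝ} {m : ℝ}
    (hG : ∀ y, HasDerivAt G (G' y) y) (hm : ∀ y, m ≤ G' y) (a b : ℝ) :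
    m * (a - b) ^ 2 ≤ (G a - G b) * (a - b) := by
  have hderiv : ∀ y, HasDerivAt (fun y => G y - m * y) (G' y - m) y := fun y =>
    ((hG y).sub ((hasDerivAt_id y).const_mul m)).congr_deriv (by ring)
  have hmono : Monotone fun y => G y - m * y :=
    monotone_of_deriv_nonneg (fun y => (hderiv y).differentiableAt) fun y => by
      rw [(hderiv y).deriv]; linarith [hm y]
  rcases le_total a b with h | h
  · nlinarith [hmono h]
  · nlinarith [hmono h]

section Dissipative

variable {G f x y : ℝ → ℝ} {m T : ℝ}

theorem antitoneOn_exp_mul_sq_sub (hG : ∀ a b, m * (a - b) ^ 2 ≤ (G a - G b) * (a - b))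
    (hx : ∀ t ∈ Icc 0 T, HasDerivAt x (f t - G (x t)) t)
    (hy : ∀ t ∈ Icc 0 T, HasDerivAt y (f t - G (y t)) t) :
    AntitoneOn (fun t => exp (2 * m * t) * (x t - y t) ^ 2) (Icc 0 T) := by
  have hE : ∀ t ∈ Icc 0 T, HasDerivAt (fun t => exp (2 * m * t) * (x t - y t) ^ 2)
      (2 * exp (2 * m * t) * (m * (x t - y t) ^ 2 - (G (x t) - G (y t)) * (x t - y t))) t := by
    intro t ht
    have hexp := ((hasDerivAt_id' t).const_mul (2 * m)).exp
    have hsq := ((hx t ht).fun_sub (hy t ht)).fun_pow 2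
    exact (hexp.mul hsq).congr_deriv (by push_cast; ring)
  refine antitoneOn_of_deriv_nonpos (convex_Icc 0 T)
    (fun t ht => (hE t ht).continuousAt.continuousWithinAt) ?_ ?_ <;> rw [interior_Icc]
  · exact fun t ht => (hE t (Ioo_subset_Icc_self ht)).differentiableAt.differentiableWithinAt
  · intro t ht
    rw [(hE t (Ioo_subset_Icc_self ht)).deriv]
    exact mul_nonpos_of_nonneg_of_nonpos (by positivity) (sub_nonpos.2 (hG _ _))

theorem abs_sub_le_exp_mul_abs_sub (hT : 0 ≤ T)
    (hG : ∀ a b, m * (a - b) ^ 2 ≤ (G a - G b) * (a - b))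
    (hx : ∀ t ∈ Icc 0 T, HasDerivAt x (f t - G (x t)) t)
    (hy : ∀ t ∈ Icc 0 T, HasDerivAt y (f t - G (y t)) t) :
    |x T - y T| ≤ exp (-m * T) * |x 0 - y 0| := by
  have hE := antitoneOn_exp_mul_sq_sub hG hx hy (left_mem_Icc.2 hT) (right_mem_Icc.2 hT) hT
  simp only [mul_zero, exp_zero, one_mul] at hE
  have hexp : exp (-m * T) ^ 2 * exp (2 * m * T) = 1 := by
    rw [← exp_nat_mul, ← exp_add, exp_eq_one_iff]
    push_cast
    ring
  rw [← pow_le_pow_iff_left₀ (abs_nonneg _) (by positivity) two_ne_zero, mul_pow, sq_abs, sq_abs]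
  calc (x T - y T) ^ 2 = exp (-m * T) ^ 2 * (exp (2 * m * T) * (x T - y T) ^ 2) := by
        rw [← mul_assoc, hexp, one_mul]
    _ ≤ exp (-m * T) ^ 2 * (x 0 - y 0) ^ 2 := by gcongr

end Dissipative

theorem LipschitzWith.dist_iterate_le_of_isFixedPt {α : Type*} [PseudoMetricSpace α]
    {K : NNReal} {Φ : α → α} (hΦ : LipschitzWith K Φ) {p : α} (hp : IsFixedPt Φ p)
    (x : α) (k : ℕ) : dist (Φ^[k] x) p ≤ K ^ k * dist x p := by
  simpa [(hp.iterate k).eq] using (hΦ.iterate k).dist_le_mul x p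

theorem stmt12_general
    (gmin U : ℝ) (hgmin : 0 < gmin)
    (g : ℝ → ℝ → ℝ) (gv : ℝ → ℝ → ℝ) (f : ℝ → ℝ)
    (hgv : ∀ a b, HasDerivAt (fun y => g a y) (gv a b) b)
    (hgvbd : ∀ a b, gmin ≤ gv a b)
    -- the flow: `w β` is the solution with initial value `β`, and `Φ` is the time-1 map
    (w : ℝ → ℝ → ℝ) (Φ : ℝ → ℝ)
    (hw0 : ∀ β, w β 0 = β)
    (hw : ∀ β, ∀ t ∈ Set.Icc (0:ℝ) 1, HasDerivAt (w β) (f t - g U (w β t)) t)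
    (hΦ : ∀ β, Φ β = w β 1) :
    (∀ β₁ β₂, |Φ β₁ - Φ β₂| ≤ Real.exp (-gmin) * |β₁ - β₂|) ∧
      ∃ vstar : ℝ, Φ vstar = vstar ∧ (∀ y, Φ y = y → y = vstar) ∧
        ∀ v0 : ℝ, ∀ k : ℕ, |Φ^[k] v0 - vstar| ≤ Real.exp (-(k : ℝ) * gmin) * |v0 - vstar| := by
  have hmono := mul_sq_sub_le_mul_sub_of_le_deriv (hgv U) (hgvbd U)
  have hcontr : ∀ β₁ β₂, |Φ β₁ - Φ β₂| ≤ exp (-gmin) * |β₁ - β₂| := fun β₁ β₂ => by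
    simpa [hΦ, hw0] using abs_sub_le_exp_mul_abs_sub zero_le_one hmono (hw β₁) (hw β₂)
  set K : NNReal := ⟨exp (-gmin), (exp_pos _).le⟩
  have hlip : LipschitzWith K Φ :=
    LipschitzWith.of_dist_le_mul fun a b => by rw [Real.dist_eq, Real.dist_eq]; exact hcontr a b
  have hK : ContractingWith K Φ :=
    ⟨show exp (-gmin) < 1 from exp_lt_one_iff.2 (neg_lt_zero.2 hgmin), hlip⟩
  refine ⟨hcontr, hK.fixedPoint Φ, hK.fixedPoint_isFixedPt, fun y hy => hK.fixedPoint_unique hy,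
    fun v0 k => ?_⟩
  rw [neg_mul, ← mul_neg, exp_nat_mul]
  have := hlip.dist_iterate_le_of_isFixedPt hK.fixedPoint_isFixedPt v0 k
  rwa [Real.dist_eq, Real.dist_eq] at this

/-- the period-1 solution map is a contraction with factor `e^{-g_min}`,
hence has a unique fixed point and the shooting iterates converge geometrically. -/
theorem stmt12
    (gmin U : ℝ) (hgmin : 0 < gmin)
    (g : ℝ → ℝ → ℝ) (gv : ℝ → ℝ → ℝ) (f : ℝ → ℝ) (hf : Continuous f)
    (hgv : ∀ a b, HasDerivAt (fun y => g a y) (gv a b) b)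
    (hgvbd : ∀ a b, gmin ≤ gv a b)
    -- the flow: `w β` is the solution with initial value `β`, and `Φ` is the time-1 map
    (w : ℝ → ℝ → ℝ) (Φ : ℝ → ℝ)
    (hw0 : ∀ β, w β 0 = β)
    (hw : ∀ β, ∀ t ∈ Set.Icc (0:ℝ) 1, HasDerivAt (w β) (f t - g U (w β t)) t)
    (hΦ : ∀ β, Φ β = w β 1) :
    (∀ β₁ β₂, |Φ β₁ - Φ β₂| ≤ Real.exp (-gmin) * |β₁ - β₂|) ∧
      ∃ vstar : ℝ, Φ vstar = vstar ∧ (∀ y, Φ y = y → y = vstar) ∧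
        ∀ v0 : ℝ, ∀ k : ℕ, |Φ^[k] v0 - vstar| ≤ Real.exp (-(k : ℝ) * gmin) * |v0 - vstar| :=
  stmt12_general gmin U hgmin g gv f hgv hgvbd w Φ hw0 hw hΦ
end

section
/- Let F : ℝ → ℝ be the map sending β ∈ ℝ to the value at time 1 of the solution of v' = f(t) − g(U, v), v(0) = β, where g is C¹ with g_min ≤ ∂g/∂v ≤ L₄. Then F is differentiable with e^{−L₄} ≤ F'(β) ≤ e^{−g_min} for all β; in particular F is strictly increasing and has a unique fixed point. -/
/-!
The difference `u = w β' - w β` of two solutions solves the linear equation `u' = -c u` with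
`c t = slope (g U) (w β t) (w β' t) ∈ [g_min, L₄]`. Since `u² e^{2 L₄ t}` is nondecreasing and
`u² e^{2 g_min t}` nonincreasing, `u` never vanishes and `|u|` does not grow; integrating
`(log u)' = -c` then gives `u 1 = u 0 · e^{-∫ c}`. So every difference quotient of `F` lies in
`[e^{-L₄}, e^{-g_min}]`: `F` is strictly increasing and a contraction, whence the fixed point by
Banach. As `β' → β`, dominated convergence sends `∫ c` to `∫ ∂g/∂v (U, w β t) dt`, which gives
`F' β = e^{-∫ ∂g/∂v (U, w β t) dt}`.
-/

open Real Set Filter Topology MeasureTheory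

theorem HasDerivAt.mem_of_forall_slope_mem {F : ℝ → ℝ} {d β : ℝ} {s : Set ℝ}
    (hF : HasDerivAt F d β) (hs : IsClosed s) (h : ∀ β', β' ≠ β → slope F β β' ∈ s) : d ∈ s :=
  hs.mem_of_tendsto (hasDerivAt_iff_tendsto_slope.1 hF) (eventually_mem_nhdsWithin.mono h)

theorem strictMono_of_forall_slope_pos {F : ℝ → ℝ} (h : ∀ a b, a < b → 0 < slope F a b) :
    StrictMono F := fun a b hab => by
  have := h a b hab
  rw [slope_def_field] at this
  exact sub_pos.1 ((div_pos_iff_of_pos_right (sub_pos.2 hab)).1 this)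

theorem lipschitzWith_of_forall_abs_slope_le {F : ℝ → ℝ} {K : NNReal}
    (h : ∀ a b, a ≠ b → |slope F a b| ≤ K) : LipschitzWith K F := by
  refine LipschitzWith.of_dist_le_mul fun a b => ?_
  rcases eq_or_ne a b with rfl | hab
  · simp
  rw [Real.dist_eq, Real.dist_eq, abs_sub_comm, abs_sub_comm a, ← vsub_eq_sub (F b),
    ← sub_smul_slope, smul_eq_mul, abs_mul, mul_comm]
  exact mul_le_mul_of_nonneg_right (h a b hab) (abs_nonneg _)

theorem slope_mem_Icc_of_hasDerivAt {G G' : ℝ → ℝ} {m L : ℝ}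
    (hG : ∀ b, HasDerivAt G (G' b) b) (hG' : ∀ b, G' b ∈ Icc m L) {a b : ℝ} (hab : a ≠ b) :
    slope G a b ∈ Icc m L := by
  wlog h : a < b generalizing a b
  · rw [slope_comm]
    exact this hab.symm (lt_of_le_of_ne (not_lt.1 h) hab.symm)
  obtain ⟨ξ, -, hξ⟩ := exists_hasDerivAt_eq_slope G G' h
    (fun z _ => (hG z).continuousAt.continuousWithinAt) (fun z _ => hG z)
  rw [slope_def_field, ← hξ]
  exact hG' ξ

section LinearEquation

variable {u c : ℝ → ℝ} {a b m L : ℝ}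

theorem hasDerivAt_sq_mul_exp {c t : ℝ} (hu : HasDerivAt u (-(c * u t)) t) (k : ℝ) :
    HasDerivAt (fun s => u s ^ 2 * exp (k * s)) (exp (k * t) * u t ^ 2 * (k - 2 * c)) t := by
  refine ((hu.fun_pow 2).fun_mul ((hasDerivAt_id t).const_mul k).exp).congr_deriv ?_
  simp only [id, Nat.cast_ofNat]
  ring

theorem monotoneOn_sq_mul_exp (hu : ∀ t ∈ Icc a b, HasDerivAt u (-(c t * u t)) t)
    (hc : ∀ t ∈ Icc a b, u t ≠ 0 → c t ≤ L) :
    MonotoneOn (fun t => u t ^ 2 * exp (2 * L * t)) (Icc a b) := by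
  have hD t (ht : t ∈ Icc a b) := hasDerivAt_sq_mul_exp (hu t ht) (2 * L)
  refine monotoneOn_of_hasDerivWithinAt_nonneg (convex_Icc a b)
    (fun t ht => (hD t ht).continuousAt.continuousWithinAt)
    (fun t ht => (hD t (interior_subset ht)).hasDerivWithinAt) fun t ht => ?_
  rcases eq_or_ne (u t) 0 with h0 | h0
  · simp [h0]
  · have := hc t (interior_subset ht) h0
    exact mul_nonneg (by positivity) (by linarith)

theorem antitoneOn_sq_mul_exp (hu : ∀ t ∈ Icc a b, HasDerivAt u (-(c t * u t)) t)
    (hc : ∀ t ∈ Icc a b, u t ≠ 0 → m ≤ c t) :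
    AntitoneOn (fun t => u t ^ 2 * exp (2 * m * t)) (Icc a b) := by
  have hD t (ht : t ∈ Icc a b) := hasDerivAt_sq_mul_exp (hu t ht) (2 * m)
  refine antitoneOn_of_hasDerivWithinAt_nonpos (convex_Icc a b)
    (fun t ht => (hD t ht).continuousAt.continuousWithinAt)
    (fun t ht => (hD t (interior_subset ht)).hasDerivWithinAt) fun t ht => ?_
  rcases eq_or_ne (u t) 0 with h0 | h0
  · simp [h0]
  · have := hc t (interior_subset ht) h0
    exact mul_nonpos_of_nonneg_of_nonpos (by positivity) (by linarith)

theorem mul_pos_of_continuousOn_of_ne_zero (hab : a ≤ b) (hu : ContinuousOn u (Icc a b))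
    (hne : ∀ t ∈ Icc a b, u t ≠ 0) : 0 < u a * u b := by
  by_contra! h
  have h0 : (0 : ℝ) ∈ uIcc (u a) (u b) := by
    rw [mem_uIcc]
    rcases mul_nonpos_iff.1 h with h | h <;> tauto
  rw [← uIcc_of_le hab] at hu hne
  obtain ⟨t, ht, hut⟩ := intermediate_value_uIcc hu h0
  exact hne t ht hut

theorem eq_mul_exp_neg_integral_of_hasDerivAt (hab : a ≤ b)
    (hu : ∀ t ∈ Icc a b, HasDerivAt u (-(c t * u t)) t) (hne : ∀ t ∈ Icc a b, u t ≠ 0)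
    (hc : IntervalIntegrable c volume a b) : u b = u a * exp (-∫ t in a..b, c t) := by
  have ha : a ∈ Icc a b := ⟨le_rfl, hab⟩
  have hb : b ∈ Icc a b := ⟨hab, le_rfl⟩
  have hlog : ∀ t ∈ uIcc a b, HasDerivAt (fun s => log (u s)) (-c t) t := by
    rw [uIcc_of_le hab]
    intro t ht
    convert (hu t ht).log (hne t ht) using 1
    field_simp [hne t ht]
  have hFTC := intervalIntegral.integral_eq_sub_of_hasDerivAt hlog hc.neg
  rw [intervalIntegral.integral_neg] at hFTC
  have habs : |u b| = |u a| * exp (-∫ t in a..b, c t) := by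
    rw [← exp_log_eq_abs (hne b hb), ← exp_log_eq_abs (hne a ha), ← exp_add]
    congr 1
    linarith
  have hsign := mul_pos_of_continuousOn_of_ne_zero hab
    (fun t ht => (hu t ht).continuousAt.continuousWithinAt) hne
  refine mul_left_cancel₀ (hne a ha) ?_
  calc u a * u b = |u a| * |u b| := by rw [← abs_mul, abs_of_pos hsign]
    _ = |u a| * |u a| * exp (-∫ t in a..b, c t) := by rw [habs, mul_assoc]
    _ = u a * (u a * exp (-∫ t in a..b, c t)) := by rw [abs_mul_abs_self, mul_assoc]

end LinearEquation

section Solutions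

variable {G G' f x y : ℝ → ℝ} {m L T : ℝ}

-- Holds also where the solutions meet, since `slope G a a = 0`.
theorem hasDerivAt_sub_of_solutions {t : ℝ} (hx : HasDerivAt x (f t - G (x t)) t)
    (hy : HasDerivAt y (f t - G (y t)) t) :
    HasDerivAt (fun s => y s - x s) (-(slope G (x t) (y t) * (y t - x t))) t := by
  refine (hy.sub hx).congr_deriv ?_
  rw [mul_comm, ← smul_eq_mul, sub_smul_slope, vsub_eq_sub]
  ring

theorem abs_sub_le_of_solutions (hm : 0 ≤ m) (hG : ∀ b, HasDerivAt G (G' b) b)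
    (hG' : ∀ b, G' b ∈ Icc m L) (hx : ∀ t ∈ Icc 0 T, HasDerivAt x (f t - G (x t)) t)
    (hy : ∀ t ∈ Icc 0 T, HasDerivAt y (f t - G (y t)) t) {t : ℝ} (ht : t ∈ Icc 0 T) :
    |y t - x t| ≤ |y 0 - x 0| := by
  have hanti := antitoneOn_sq_mul_exp (m := m)
    (fun s hs => hasDerivAt_sub_of_solutions (hx s hs) (hy s hs))
    fun s _ hs => (slope_mem_Icc_of_hasDerivAt hG hG' (sub_ne_zero.1 hs).symm).1
  have hle := hanti ⟨le_rfl, ht.1.trans ht.2⟩ ht ht.1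
  have hexp : 1 ≤ exp (2 * m * t) := one_le_exp (by have := ht.1; positivity)
  simp only [mul_zero, exp_zero, mul_one] at hle
  exact sq_le_sq.1 (by nlinarith [sq_nonneg (y t - x t)])

theorem ne_of_solutions (hG : ∀ b, HasDerivAt G (G' b) b) (hG' : ∀ b, G' b ∈ Icc m L)
    (hx : ∀ t ∈ Icc 0 T, HasDerivAt x (f t - G (x t)) t)
    (hy : ∀ t ∈ Icc 0 T, HasDerivAt y (f t - G (y t)) t) (h0 : x 0 ≠ y 0) {t : ℝ}
    (ht : t ∈ Icc 0 T) : x t ≠ y t := by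
  have hmono := monotoneOn_sq_mul_exp (L := L)
    (fun s hs => hasDerivAt_sub_of_solutions (hx s hs) (hy s hs))
    fun s _ hs => (slope_mem_Icc_of_hasDerivAt hG hG' (sub_ne_zero.1 hs).symm).2
  have hle := hmono ⟨le_rfl, ht.1.trans ht.2⟩ ht ht.1
  intro hxy
  simp only [mul_zero, exp_zero, mul_one, hxy, sub_self] at hle
  exact sub_ne_zero.2 h0.symm (pow_eq_zero_iff two_ne_zero |>.1 (by simpa using hle))

theorem continuousOn_slope_of_solutions (hG : ∀ b, HasDerivAt G (G' b) b)
    (hG' : ∀ b, G' b ∈ Icc m L) (hx : ∀ t ∈ Icc 0 T, HasDerivAt x (f t - G (x t)) t)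
    (hy : ∀ t ∈ Icc 0 T, HasDerivAt y (f t - G (y t)) t) (h0 : x 0 ≠ y 0) :
    ContinuousOn (fun t => slope G (x t) (y t)) (Icc 0 T) := by
  have hGc : Continuous G := continuous_iff_continuousAt.2 fun b => (hG b).continuousAt
  have hxc : ContinuousOn x (Icc 0 T) := fun t ht => (hx t ht).continuousAt.continuousWithinAt
  have hyc : ContinuousOn y (Icc 0 T) := fun t ht => (hy t ht).continuousAt.continuousWithinAt
  simp_rw [slope_def_field]
  exact ((hGc.comp_continuousOn hyc).sub (hGc.comp_continuousOn hxc)).div (hyc.sub hxc)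
    fun t ht => sub_ne_zero.2 (ne_of_solutions hG hG' hx hy h0 ht).symm

theorem sub_eq_mul_exp_neg_integral_slope (hT : 0 ≤ T) (hG : ∀ b, HasDerivAt G (G' b) b)
    (hG' : ∀ b, G' b ∈ Icc m L) (hx : ∀ t ∈ Icc 0 T, HasDerivAt x (f t - G (x t)) t)
    (hy : ∀ t ∈ Icc 0 T, HasDerivAt y (f t - G (y t)) t) (h0 : x 0 ≠ y 0) :
    y T - x T = (y 0 - x 0) * exp (-∫ t in 0..T, slope G (x t) (y t)) :=
  eq_mul_exp_neg_integral_of_hasDerivAt hT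
    (fun t ht => hasDerivAt_sub_of_solutions (hx t ht) (hy t ht))
    (fun _ ht => sub_ne_zero.2 (ne_of_solutions hG hG' hx hy h0 ht).symm)
    ((continuousOn_slope_of_solutions hG hG' hx hy h0).intervalIntegrable_of_Icc hT)

theorem integral_slope_mem_Icc (hT : 0 ≤ T) (hG : ∀ b, HasDerivAt G (G' b) b)
    (hG' : ∀ b, G' b ∈ Icc m L) (hx : ∀ t ∈ Icc 0 T, HasDerivAt x (f t - G (x t)) t)
    (hy : ∀ t ∈ Icc 0 T, HasDerivAt y (f t - G (y t)) t) (h0 : x 0 ≠ y 0) :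
    ∫ t in 0..T, slope G (x t) (y t) ∈ Icc (m * T) (L * T) := by
  have hint : IntervalIntegrable (fun t => slope G (x t) (y t)) volume 0 T :=
    (continuousOn_slope_of_solutions hG hG' hx hy h0).intervalIntegrable_of_Icc hT
  have hmem t (ht : t ∈ Icc 0 T) : slope G (x t) (y t) ∈ Icc m L :=
    slope_mem_Icc_of_hasDerivAt hG hG' (ne_of_solutions hG hG' hx hy h0 ht)
  constructor
  · simpa [mul_comm] using intervalIntegral.integral_mono_on hT intervalIntegrable_const hint
      fun t ht => (hmem t ht).1
  · simpa [mul_comm] using intervalIntegral.integral_mono_on hT hint intervalIntegrable_const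
      fun t ht => (hmem t ht).2

end Solutions

section Flow

variable {G G' f : ℝ → ℝ} {m L T : ℝ} {w : ℝ → ℝ → ℝ}

theorem slope_flow_eq_exp (hT : 0 ≤ T) (hG : ∀ b, HasDerivAt G (G' b) b)
    (hG' : ∀ b, G' b ∈ Icc m L) (hw0 : ∀ β, w β 0 = β)
    (hw : ∀ β, ∀ t ∈ Icc 0 T, HasDerivAt (w β) (f t - G (w β t)) t) {β β' : ℝ}
    (h : β ≠ β') :
    slope (fun β => w β T) β β' = exp (-∫ t in 0..T, slope G (w β t) (w β' t)) := by
  have h0 : w β 0 ≠ w β' 0 := by rwa [hw0, hw0]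
  rw [slope_def_field, sub_eq_mul_exp_neg_integral_slope hT hG hG' (hw β) (hw β') h0, hw0, hw0,
    mul_div_cancel_left₀ _ (sub_ne_zero.2 h.symm)]

theorem slope_flow_mem_Icc (hT : 0 ≤ T) (hG : ∀ b, HasDerivAt G (G' b) b)
    (hG' : ∀ b, G' b ∈ Icc m L) (hw0 : ∀ β, w β 0 = β)
    (hw : ∀ β, ∀ t ∈ Icc 0 T, HasDerivAt (w β) (f t - G (w β t)) t) {β β' : ℝ}
    (h : β ≠ β') :
    slope (fun β => w β T) β β' ∈ Icc (exp (-(L * T))) (exp (-(m * T))) := by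
  have hJ := integral_slope_mem_Icc hT hG hG' (hw β) (hw β') (by rwa [hw0, hw0])
  rw [slope_flow_eq_exp hT hG hG' hw0 hw h]
  exact ⟨exp_le_exp.2 (neg_le_neg hJ.2), exp_le_exp.2 (neg_le_neg hJ.1)⟩

theorem lipschitzWith_one_flow (hm : 0 ≤ m) (hG : ∀ b, HasDerivAt G (G' b) b)
    (hG' : ∀ b, G' b ∈ Icc m L) (hw0 : ∀ β, w β 0 = β)
    (hw : ∀ β, ∀ t ∈ Icc 0 T, HasDerivAt (w β) (f t - G (w β t)) t) {t : ℝ}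
    (ht : t ∈ Icc 0 T) : LipschitzWith 1 (fun β => w β t) :=
  LipschitzWith.of_dist_le_mul fun β β' => by
    simpa [Real.dist_eq, hw0] using abs_sub_le_of_solutions hm hG hG' (hw β') (hw β) ht

theorem tendsto_flow_nhdsNE (hm : 0 ≤ m) (hG : ∀ b, HasDerivAt G (G' b) b)
    (hG' : ∀ b, G' b ∈ Icc m L) (hw0 : ∀ β, w β 0 = β)
    (hw : ∀ β, ∀ t ∈ Icc 0 T, HasDerivAt (w β) (f t - G (w β t)) t) {t : ℝ}
    (ht : t ∈ Icc 0 T) (β : ℝ) : Tendsto (fun β' => w β' t) (𝓝[≠] β) (𝓝[≠] (w β t)) := by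
  refine tendsto_nhdsWithin_iff.2 ⟨?_, ?_⟩
  · exact (lipschitzWith_one_flow hm hG hG' hw0 hw ht).continuous.continuousAt.tendsto.mono_left
      nhdsWithin_le_nhds
  filter_upwards [self_mem_nhdsWithin] with β' hβ'
  have h0 : w β 0 ≠ w β' 0 := by rw [hw0, hw0]; exact Ne.symm hβ'
  exact (ne_of_solutions hG hG' (hw β) (hw β') h0 ht).symm

theorem tendsto_integral_slope_flow (hm : 0 ≤ m) (hT : 0 ≤ T)
    (hG : ∀ b, HasDerivAt G (G' b) b) (hG' : ∀ b, G' b ∈ Icc m L) (hw0 : ∀ β, w β 0 = β)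
    (hw : ∀ β, ∀ t ∈ Icc 0 T, HasDerivAt (w β) (f t - G (w β t)) t) (β : ℝ) :
    Tendsto (fun β' => ∫ t in 0..T, slope G (w β t) (w β' t)) (𝓝[≠] β)
      (𝓝 (∫ t in 0..T, G' (w β t))) := by
  have hI : uIoc 0 T ⊆ Icc 0 T := uIoc_of_le hT ▸ Ioc_subset_Icc_self
  have h0 : ∀ᶠ β' in 𝓝[≠] β, w β 0 ≠ w β' 0 := by
    filter_upwards [self_mem_nhdsWithin] with β' hβ'
    rw [hw0, hw0]
    exact Ne.symm hβ'
  refine intervalIntegral.tendsto_integral_filter_of_dominated_convergence (fun _ => L) ?_ ?_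
    intervalIntegrable_const (ae_of_all _ fun t ht => ?_)
  · filter_upwards [h0] with β' hβ'
    exact ((continuousOn_slope_of_solutions hG hG' (hw β) (hw β') hβ').mono hI)
      |>.aestronglyMeasurable measurableSet_uIoc
  · filter_upwards [h0] with β' hβ'
    refine ae_of_all _ fun t ht => ?_
    have hs := slope_mem_Icc_of_hasDerivAt hG hG'
      (ne_of_solutions hG hG' (hw β) (hw β') hβ' (hI ht))
    rw [Real.norm_eq_abs, abs_of_nonneg (hm.trans hs.1)]
    exact hs.2
  · exact (hasDerivAt_iff_tendsto_slope.1 (hG (w β t))).comp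
      (tendsto_flow_nhdsNE hm hG hG' hw0 hw (hI ht) β)

theorem hasDerivAt_flow (hm : 0 ≤ m) (hT : 0 ≤ T) (hG : ∀ b, HasDerivAt G (G' b) b)
    (hG' : ∀ b, G' b ∈ Icc m L) (hw0 : ∀ β, w β 0 = β)
    (hw : ∀ β, ∀ t ∈ Icc 0 T, HasDerivAt (w β) (f t - G (w β t)) t) (β : ℝ) :
    HasDerivAt (fun β => w β T) (exp (-∫ t in 0..T, G' (w β t))) β := by
  rw [hasDerivAt_iff_tendsto_slope]
  refine ((continuous_exp.tendsto _).comp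
    (tendsto_integral_slope_flow hm hT hG hG' hw0 hw β).neg).congr' ?_
  filter_upwards [self_mem_nhdsWithin] with β' hβ'
  exact (slope_flow_eq_exp hT hG hG' hw0 hw (Ne.symm hβ')).symm

end Flow

theorem stmt19_general
    (gmin L₄ U : ℝ) (hgmin : 0 < gmin)
    (g : ℝ → ℝ → ℝ) (gv : ℝ → ℝ → ℝ) (f : ℝ → ℝ)
    (hgv : ∀ a b, HasDerivAt (fun y => g a y) (gv a b) b)
    (hgvbd : ∀ a b, gmin ≤ gv a b ∧ gv a b ≤ L₄)
    -- the flow `w β` with initial value `β` and the period map `F`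
    (w : ℝ → ℝ → ℝ) (F : ℝ → ℝ)
    (hw0 : ∀ β, w β 0 = β)
    (hw : ∀ β, ∀ t ∈ Set.Icc (0:ℝ) 1, HasDerivAt (w β) (f t - g U (w β t)) t)
    (hF : ∀ β, F β = w β 1) :
    (∀ β, ∃ d : ℝ, HasDerivAt F d β ∧ Real.exp (-L₄) ≤ d ∧ d ≤ Real.exp (-gmin)) ∧
      StrictMono F ∧ ∃! β : ℝ, F β = β := by
  obtain rfl : F = fun β => w β 1 := funext hF
  have hG : ∀ b, HasDerivAt (g U) (gv U b) b := hgv U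
  have hG' : ∀ b, gv U b ∈ Icc gmin L₄ := hgvbd U
  have hslope {β β' : ℝ} (h : β ≠ β') :
      slope (fun β => w β 1) β β' ∈ Icc (exp (-L₄)) (exp (-gmin)) := by
    simpa using slope_flow_mem_Icc zero_le_one hG hG' hw0 hw h
  have hderiv β := hasDerivAt_flow hgmin.le zero_le_one hG hG' hw0 hw β
  have hcontr : ContractingWith ⟨exp (-gmin), (exp_pos _).le⟩ (fun β => w β 1) :=
    ⟨exp_lt_one_iff.2 (neg_lt_zero.2 hgmin), lipschitzWith_of_forall_abs_slope_le fun _ _ h =>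
      (abs_of_pos ((exp_pos _).trans_le (hslope h).1)).trans_le (hslope h).2⟩
  refine ⟨fun β => ⟨_, hderiv β, (hderiv β).mem_of_forall_slope_mem isClosed_Icc
      fun _ h => hslope h.symm⟩,
    strictMono_of_forall_slope_pos fun _ _ h => (exp_pos _).trans_le (hslope h.ne).1,
    ⟨hcontr.fixedPoint, hcontr.fixedPoint_isFixedPt, fun _ h => hcontr.fixedPoint_unique h⟩⟩

/-- the period map of the damped ODE is differentiable with derivative in
`[e^{-L₄}, e^{-g_min}]`, hence strictly increasing with a unique fixed point. -/
theorem stmt19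
    (gmin L₄ U : ℝ) (hgmin : 0 < gmin) (hL₄ : gmin ≤ L₄)
    (g : ℝ → ℝ → ℝ) (gv : ℝ → ℝ → ℝ) (f : ℝ → ℝ) (hf : Continuous f)
    (hgv : ∀ a b, HasDerivAt (fun y => g a y) (gv a b) b)
    (hgvbd : ∀ a b, gmin ≤ gv a b ∧ gv a b ≤ L₄)
    -- the flow `w β` with initial value `β` and the period map `F`
    (w : ℝ → ℝ → ℝ) (F : ℝ → ℝ)
    (hw0 : ∀ β, w β 0 = β)
    (hw : ∀ β, ∀ t ∈ Set.Icc (0:ℝ) 1, HasDerivAt (w β) (f t - g U (w β t)) t)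
    (hF : ∀ β, F β = w β 1) :
    (∀ β, ∃ d : ℝ, HasDerivAt F d β ∧ Real.exp (-L₄) ≤ d ∧ d ≤ Real.exp (-gmin)) ∧
      StrictMono F ∧ ∃! β : ℝ, F β = β :=
  stmt19_general gmin L₄ U hgmin g gv f hgv hgvbd w F hw0 hw hF
end
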